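/- For every t ∈ (−1,1), the map c_t is a strictly increasing continuous bijection of (0,1) onto (0,1), differentiable on (0,1) with derivative bounded between 1/2 and 3/2, and satisfies c_t(x) → 0 as x → 0⁺ and c_t(x) → 1 as x → 1⁻. In other words, c_t belongs to the group D of diffeomorphisms of (0,1). -/

import Mathlib

/-- The polynomial `P(x) = (x - x^2)/2` from the paper's appendix. -/
noncomputable def P (x : ℝ) : ℝ := (x - x ^ 2) / 2

/-- `φ(t,x) = P(x)·t / ((1 - P(x))·t + P(x))`, intended for `t ≥ 0`. -/
noncomputable def φ (t x : ℝ) : ℝ := P x * t / ((1 - P x) * t + P x)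

/-- The path of maps `c_t(x) = x + φ(t,x)` for `t ≥ 0`, `x - φ(-t,x)` for `t < 0`. -/
noncomputable def c (t x : ℝ) : ℝ := if 0 ≤ t then x + φ t x else x - φ (-t) x

/-- The group `D` of diffeomorphisms of `(0,1)`: maps of `(0,1)` into `(0,1)`,
differentiable on `(0,1)`, with derivative bounded below by a positive constant and
bounded above, tending to `0` at `0⁺` and to `1` at `1⁻`. -/
def D : Set (ℝ → ℝ) :=
  {f | Set.MapsTo f (Set.Ioo (0 : ℝ) 1) (Set.Ioo (0 : ℝ) 1) ∧
    (∀ x ∈ Set.Ioo (0 : ℝ) 1, DifferentiableAt ℝ f x) ∧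
    (∃ m > (0 : ℝ), ∀ x ∈ Set.Ioo (0 : ℝ) 1, m ≤ deriv f x) ∧
    (∃ M : ℝ, ∀ x ∈ Set.Ioo (0 : ℝ) 1, deriv f x ≤ M) ∧
    Filter.Tendsto f (nhdsWithin 0 (Set.Ioi 0)) (nhds 0) ∧
    Filter.Tendsto f (nhdsWithin 1 (Set.Iio 1)) (nhds 1)}

/-!
Write `s = |t|` and `D = (1 - P x) s + P x`, so that `c_t x - x = ±φ(s, x) = ±(s / D) P(x)`.
For `s ≤ 1` we have `s ≤ D`, so `0 ≤ φ(s, x) ≤ P(x) < min(x, 1 - x)`: this keeps `c_t` inside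
`(0,1)` and forces `c_t x → 0, 1` at the endpoints. The quotient rule gives
`∂ₓφ(s, x) = (s / D)² P'(x)` with `|P'(x)| = |1 - 2x| / 2 ≤ 1/2`, whence `1/2 ≤ c_t' ≤ 3/2`.
Surjectivity onto `(0,1)` then follows from the boundary limits and the intermediate value theorem.
-/

open Set Filter Topology

theorem ContinuousOn.surjOn_Ioo_of_tendsto {α δ : Type*} [ConditionallyCompleteLinearOrder α]
    [TopologicalSpace α] [OrderTopology α] [DenselyOrdered α] [LinearOrder δ] [TopologicalSpace δ]
    [OrderTopology δ] {f : α → δ} {a b : α} {a' b' : δ} (hab : a < b)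
    (hf : ContinuousOn f (Ioo a b)) (ha : Tendsto f (𝓝[>] a) (𝓝 a'))
    (hb : Tendsto f (𝓝[<] b) (𝓝 b')) : SurjOn f (Ioo a b) (Ioo a' b') := by
  have := nhdsGT_neBot_of_exists_gt ⟨b, hab⟩
  have := nhdsLT_neBot_of_exists_lt ⟨a, hab⟩
  intro y hy
  obtain ⟨u, hfu, hu⟩ := ((ha.eventually (gt_mem_nhds hy.1)).and (Ioo_mem_nhdsGT hab)).exists
  obtain ⟨v, hfv, hv⟩ := ((hb.eventually (lt_mem_nhds hy.2)).and (Ioo_mem_nhdsLT hab)).exists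
  exact hf.surjOn_Icc hu hv ⟨hfu.le, hfv.le⟩

section P

variable {x : ℝ}

theorem P_pos (hx : x ∈ Ioo (0 : ℝ) 1) : 0 < P x := by
  unfold P; nlinarith [hx.1, hx.2]

theorem P_lt_self (hx : x ∈ Ioo (0 : ℝ) 1) : P x < x := by
  unfold P; nlinarith [hx.1, hx.2]

theorem P_lt_one_sub (hx : x ∈ Ioo (0 : ℝ) 1) : P x < 1 - x := by
  unfold P; nlinarith [hx.1, hx.2]

theorem continuous_P : Continuous P := by
  unfold P; fun_prop

theorem hasDerivAt_P (x : ℝ) : HasDerivAt P ((1 - 2 * x) / 2) x := by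
  have : HasDerivAt (fun y : ℝ => (y - y ^ 2) / 2) ((1 - 2 * x) / 2) x := by
    simpa using ((hasDerivAt_id x).sub (hasDerivAt_pow 2 x)).div_const 2
  exact this

end P

section φ

variable {s p x : ℝ}

theorem le_φ_denom (hp : 0 ≤ p) (hs1 : s ≤ 1) : s ≤ (1 - p) * s + p := by
  nlinarith

theorem φ_denom_pos (hp : 0 < p) (hs0 : 0 ≤ s) (hs1 : s ≤ 1) : 0 < (1 - p) * s + p := by
  rcases hs0.eq_or_lt with rfl | hs
  · simpa using hp
  · exact hs.trans_le (le_φ_denom hp.le hs1)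

theorem φ_nonneg (hs0 : 0 ≤ s) (hs1 : s ≤ 1) (hx : x ∈ Ioo (0 : ℝ) 1) : 0 ≤ φ s x :=
  div_nonneg (mul_nonneg (P_pos hx).le hs0) (φ_denom_pos (P_pos hx) hs0 hs1).le

theorem φ_le_P (hs0 : 0 ≤ s) (hs1 : s ≤ 1) (hx : x ∈ Ioo (0 : ℝ) 1) : φ s x ≤ P x := by
  rw [φ, div_le_iff₀ (φ_denom_pos (P_pos hx) hs0 hs1)]
  exact mul_le_mul_of_nonneg_left (le_φ_denom (P_pos hx).le hs1) (P_pos hx).le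

theorem hasDerivAt_φ (hs0 : 0 ≤ s) (hs1 : s ≤ 1) (hx : x ∈ Ioo (0 : ℝ) 1) :
    HasDerivAt (φ s) ((s / ((1 - P x) * s + P x)) ^ 2 * ((1 - 2 * x) / 2)) x := by
  have hD := φ_denom_pos (P_pos hx) hs0 hs1
  have hP := hasDerivAt_P x
  have hDen : HasDerivAt (fun y => (1 - P y) * s + P y)
      (-((1 - 2 * x) / 2) * s + (1 - 2 * x) / 2) x :=
    ((hP.const_sub 1).mul_const s).add hP
  exact ((hP.mul_const s).div hDen hD.ne').congr_deriv (by field_simp; ring)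

theorem abs_deriv_φ_le (hs0 : 0 ≤ s) (hs1 : s ≤ 1) (hx : x ∈ Ioo (0 : ℝ) 1) :
    |(s / ((1 - P x) * s + P x)) ^ 2 * ((1 - 2 * x) / 2)| ≤ 1 / 2 := by
  have hD := φ_denom_pos (P_pos hx) hs0 hs1
  have hq : (s / ((1 - P x) * s + P x)) ^ 2 ≤ 1 :=
    pow_le_one₀ (div_nonneg hs0 hD.le) ((div_le_one hD).2 (le_φ_denom (P_pos hx).le hs1))
  have hP' : |(1 - 2 * x) / 2| ≤ 1 / 2 := abs_le.2 ⟨by linarith [hx.2], by linarith [hx.1]⟩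
  rw [abs_mul, abs_of_nonneg (sq_nonneg _)]
  exact (mul_le_of_le_one_left (abs_nonneg _) hq).trans hP'

end φ

section c

variable {t x : ℝ}

theorem c_eq_add_mul_φ (t : ℝ) : ∃ ε : ℝ, |ε| ≤ 1 ∧ c t = fun x => x + ε * φ |t| x := by
  rcases le_or_gt 0 t with ht | ht
  · exact ⟨1, by simp, funext fun x => by simp [c, ht, abs_of_nonneg ht]⟩
  · exact ⟨-1, by simp, funext fun x => by simp [c, ht.not_ge, abs_of_neg ht, sub_eq_add_neg]⟩

theorem abs_c_sub_self_le (ht : |t| ≤ 1) (hx : x ∈ Ioo (0 : ℝ) 1) : |c t x - x| ≤ P x := by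
  obtain ⟨ε, hε, hc⟩ := c_eq_add_mul_φ t
  have hφ := φ_nonneg (abs_nonneg t) ht hx
  calc |c t x - x| = |ε| * φ |t| x := by rw [hc, add_sub_cancel_left, abs_mul, abs_of_nonneg hφ]
    _ ≤ 1 * P x := mul_le_mul hε (φ_le_P (abs_nonneg t) ht hx) hφ zero_le_one
    _ = P x := one_mul _

theorem mapsTo_c (ht : |t| ≤ 1) : MapsTo (c t) (Ioo 0 1) (Ioo 0 1) := fun x hx => by
  have h := abs_le.1 (abs_c_sub_self_le ht hx)
  exact ⟨by linarith [P_lt_self hx], by linarith [P_lt_one_sub hx]⟩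

theorem tendsto_c {l : Filter ℝ} {a : ℝ} (ht : |t| ≤ 1) (hl : l ≤ 𝓝 a) (hIoo : Ioo 0 1 ∈ l)
    (ha : P a = 0) : Tendsto (c t) l (𝓝 a) := by
  have hP : Tendsto P l (𝓝 0) := ha ▸ (continuous_P.tendsto a).mono_left hl
  have hsub : Tendsto (fun x => c t x - x) l (𝓝 0) :=
    squeeze_zero_norm' (mem_of_superset hIoo fun x hx => abs_c_sub_self_le ht hx) hP
  simpa using (tendsto_id.mono_left hl).add hsub

theorem exists_hasDerivAt_c (ht : |t| ≤ 1) (hx : x ∈ Ioo (0 : ℝ) 1) :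
    ∃ d, HasDerivAt (c t) d x ∧ |d - 1| ≤ 1 / 2 := by
  obtain ⟨ε, hε, hc⟩ := c_eq_add_mul_φ t
  rw [hc]
  refine ⟨_, (hasDerivAt_id x).add ((hasDerivAt_φ (abs_nonneg t) ht hx).const_mul ε), ?_⟩
  rw [add_sub_cancel_left, abs_mul]
  exact (mul_le_of_le_one_left (abs_nonneg _) hε).trans (abs_deriv_φ_le (abs_nonneg t) ht hx)

end c

theorem stmt_5 :
    ∀ t ∈ Set.Ioo (-1 : ℝ) 1,
      StrictMonoOn (c t) (Set.Ioo (0 : ℝ) 1) ∧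
      ContinuousOn (c t) (Set.Ioo (0 : ℝ) 1) ∧
      Set.BijOn (c t) (Set.Ioo (0 : ℝ) 1) (Set.Ioo (0 : ℝ) 1) ∧
      (∀ x ∈ Set.Ioo (0 : ℝ) 1, DifferentiableAt ℝ (c t) x ∧
        (1 : ℝ) / 2 ≤ deriv (c t) x ∧ deriv (c t) x ≤ 3 / 2) ∧
      Filter.Tendsto (c t) (nhdsWithin 0 (Set.Ioi 0)) (nhds 0) ∧
      Filter.Tendsto (c t) (nhdsWithin 1 (Set.Iio 1)) (nhds 1) ∧
      c t ∈ D := by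
  intro t ht
  have ht' : |t| ≤ 1 := abs_le.2 ⟨ht.1.le, ht.2.le⟩
  have hderiv : ∀ x ∈ Ioo (0 : ℝ) 1, DifferentiableAt ℝ (c t) x ∧
      (1 : ℝ) / 2 ≤ deriv (c t) x ∧ deriv (c t) x ≤ 3 / 2 := fun x hx => by
    obtain ⟨d, hd, hd1⟩ := exists_hasDerivAt_c ht' hx
    have := abs_le.1 hd1
    exact ⟨hd.differentiableAt, by rw [hd.deriv]; linarith, by rw [hd.deriv]; linarith⟩
  have hcont : ContinuousOn (c t) (Ioo 0 1) := fun x hx =>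
    (hderiv x hx).1.continuousAt.continuousWithinAt
  have hmono : StrictMonoOn (c t) (Ioo 0 1) :=
    strictMonoOn_of_deriv_pos (convex_Ioo 0 1) hcont fun x hx => by
      rw [interior_Ioo] at hx; linarith [(hderiv x hx).2.1]
  have h0 : Tendsto (c t) (𝓝[>] 0) (𝓝 0) :=
    tendsto_c ht' nhdsWithin_le_nhds (Ioo_mem_nhdsGT zero_lt_one) (by norm_num [P])
  have h1 : Tendsto (c t) (𝓝[<] 1) (𝓝 1) :=
    tendsto_c ht' nhdsWithin_le_nhds (Ioo_mem_nhdsLT zero_lt_one) (by norm_num [P])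
  refine ⟨hmono, hcont, ⟨mapsTo_c ht', hmono.injOn, hcont.surjOn_Ioo_of_tendsto zero_lt_one h0 h1⟩,
    hderiv, h0, h1, mapsTo_c ht', fun x hx => (hderiv x hx).1,
    ⟨1 / 2, by norm_num, fun x hx => (hderiv x hx).2.1⟩, ⟨3 / 2, fun x hx => (hderiv x hx).2.2⟩,
    h0, h1⟩
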